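/- Let α be irrational with continued fraction convergents l_k/q_k satisfying q_{k+1} ≥ e^{q_k} for all k ≥ 1, and set q_{−k} := −q_k. Then the series h(x) = ∑_{k ≠ 0} ((e(q_k α) − 1)/|k|) e(q_k x) converges for every x ∈ ℝ and defines a real-valued, infinitely differentiable (C^∞), 1-periodic function h : ℝ → ℝ. -/

import Mathlib

open Filter

/-- `e(x) = exp(2πix)`. -/
noncomputable def e (x : ℝ) : ℂ := Complex.exp (2 * Real.pi * Complex.I * x)

/-- Gauss-map iterates of `α`, used to define the continued fraction expansion. -/
noncomputable def cfX (α : ℝ) : ℕ → ℝ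
  | 0 => α
  | k + 1 => (Int.fract (cfX α k))⁻¹

/-- Partial quotients `a_k` of the continued fraction expansion of `α`. -/
noncomputable def cfA (α : ℝ) (k : ℕ) : ℤ := ⌊cfX α k⌋

/-- Denominators `q_k` of the continued fraction convergents of `α`:
`q₀ = 1`, `q₁ = a₁`, `q_k = a_k q_{k-1} + q_{k-2}`. -/
noncomputable def cfQ (α : ℝ) : ℕ → ℤ
  | 0 => 1
  | 1 => cfA α 1
  | k + 2 => cfA α (k + 2) * cfQ α (k + 1) + cfQ α k

/-- Numerators `l_k` of the continued fraction convergents of `α`: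
`l₀ = a₀`, `l₁ = a₀a₁ + 1`, `l_k = a_k l_{k-1} + l_{k-2}`. -/
noncomputable def cfL (α : ℝ) : ℕ → ℤ
  | 0 => cfA α 0
  | 1 => cfA α 0 * cfA α 1 + 1
  | k + 2 => cfA α (k + 2) * cfL α (k + 1) + cfL α k

/-- `q_k` extended to negative indices by `q_{-k} = -q_k`. -/
noncomputable def cfQZ (α : ℝ) (k : ℤ) : ℤ :=
  if 0 ≤ k then cfQ α k.toNat else -cfQ α (-k).toNat

variable {α : ℝ} (hα : Irrational α)
include hα

lemma irr_cfX (k : ℕ) : Irrational (cfX α k) := by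
  induction k with
  | zero => exact hα
  | succ n ih =>
    have h1 : Irrational (Int.fract (cfX α n)) := by
      rw [Int.fract]
      exact Irrational.sub_intCast ih _
    exact h1.inv

lemma fract_pos (k : ℕ) : 0 < Int.fract (cfX α k) := by
  rcases lt_or_eq_of_le (Int.fract_nonneg (cfX α k)) with h | h
  · exact h
  · exfalso
    have h2 : Irrational (Int.fract (cfX α k)) := by
      rw [Int.fract]; exact Irrational.sub_intCast (irr_cfX hα k) _
    exact h2 ⟨0, by simp [← h]⟩

lemma one_lt_cfX (k : ℕ) : 1 < cfX α (k + 1) := by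
  show 1 < (Int.fract (cfX α k))⁻¹
  rw [lt_inv_comm₀ one_pos (fract_pos hα k)]
  simpa using (Int.fract_lt_one (cfX α k))

lemma one_le_cfA (k : ℕ) : 1 ≤ cfA α (k + 1) := by
  unfold cfA
  exact Int.le_floor.2 (by exact_mod_cast (one_lt_cfX hα k).le)

lemma one_le_cfQ (k : ℕ) : 1 ≤ cfQ α k := by
  induction k using Nat.strong_induction_on with
  | _ k ih =>
    match k with
    | 0 => simp [cfQ]
    | 1 => exact one_le_cfA hα 0
    | (n + 2) =>
      have h1 := ih (n + 1) (by omega)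
      have h2 := ih n (by omega)
      have h3 := one_le_cfA hα (n + 1)
      rw [show cfQ α (n+2) = cfA α (n+2) * cfQ α (n+1) + cfQ α n from rfl]
      nlinarith

lemma cfX_recur (k : ℕ) : cfX α k = cfA α k + (cfX α (k + 1))⁻¹ := by
  have h := fract_pos hα k
  show cfX α k = cfA α k + ((Int.fract (cfX α k))⁻¹)⁻¹
  rw [inv_inv, cfA, Int.fract]
  ring

lemma cfX_ne_zero (k : ℕ) : cfX α (k + 1) ≠ 0 := by
  have := one_lt_cfX hα k; linarith

omit hα in
lemma step_alg (av Q0 Q1 L0 L1 A X Y : ℝ) (hY : Y ≠ 0) (hX : X = A + Y⁻¹)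
    (ih : av * (Q1 * X + Q0) = L1 * X + L0) :
    av * ((A * Q1 + Q0) * Y + Q1) = (A * L1 + L0) * Y + L1 := by
  have hXY : X * Y = A * Y + 1 := by rw [hX]; field_simp
  calc av * ((A * Q1 + Q0) * Y + Q1) = av * (Q1 * (A * Y + 1) + Q0 * Y) := by ring
    _ = av * (Q1 * (X * Y) + Q0 * Y) := by rw [hXY]
    _ = (av * (Q1 * X + Q0)) * Y := by ring
    _ = (L1 * X + L0) * Y := by rw [ih]
    _ = L1 * (X * Y) + L0 * Y := by ring
    _ = L1 * (A * Y + 1) + L0 * Y := by rw [hXY]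
    _ = (A * L1 + L0) * Y + L1 := by ring

omit hα in
lemma base_alg (av a x : ℝ) (hx : x ≠ 0) (e0 : av = a + x⁻¹) :
    av * (1 * x + 0) = a * x + 1 := by
  rw [e0]; field_simp; ring

lemma base_identity : α * (1 * cfX α 1 + 0) = (cfA α 0 : ℝ) * cfX α 1 + 1 :=
  base_alg α _ _ (cfX_ne_zero hα 0) (cfX_recur hα 0)

lemma key_identity (k : ℕ) :
    α * ((cfQ α (k + 1) : ℝ) * cfX α (k + 2) + cfQ α k)
      = (cfL α (k + 1) : ℝ) * cfX α (k + 2) + cfL α k := by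
  induction k with
  | zero =>
    have h := step_alg α 0 1 1 (cfA α 0 : ℝ) (cfA α 1 : ℝ) (cfX α 1) (cfX α 2)
      (cfX_ne_zero hα 1) (cfX_recur hα 1) (base_identity hα)
    show α * ((cfQ α 1 : ℝ) * cfX α 2 + (cfQ α 0 : ℝ)) = (cfL α 1 : ℝ) * cfX α 2 + (cfL α 0 : ℝ)
    rw [show cfQ α 1 = cfA α 1 from rfl, show cfQ α 0 = 1 from rfl,
      show cfL α 1 = cfA α 0 * cfA α 1 + 1 from rfl, show cfL α 0 = cfA α 0 from rfl]
    push_cast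
    calc α * ((cfA α 1 : ℝ) * cfX α 2 + 1)
        = α * (((cfA α 1 : ℝ) * 1 + 0) * cfX α 2 + 1) := by ring
      _ = ((cfA α 1 : ℝ) * (cfA α 0 : ℝ) + 1) * cfX α 2 + (cfA α 0 : ℝ) := h
      _ = (cfA α 0 : ℝ) * (cfA α 1 : ℝ) * cfX α 2 + 1 * cfX α 2 + (cfA α 0 : ℝ) := by ring
      _ = _ := by ring
  | succ n ih =>
    have h := step_alg α (cfQ α n : ℝ) (cfQ α (n+1) : ℝ) (cfL α n : ℝ) (cfL α (n+1) : ℝ)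
      (cfA α (n+2) : ℝ) (cfX α (n+2)) (cfX α (n+3))
      (cfX_ne_zero hα (n+2)) (cfX_recur hα (n+2)) ih
    rw [show cfQ α (n+2) = cfA α (n+2) * cfQ α (n+1) + cfQ α n from rfl,
      show cfL α (n+2) = cfA α (n+2) * cfL α (n+1) + cfL α n from rfl]
    push_cast
    convert h using 2 <;> ring

omit hα in
lemma det_identity (k : ℕ) :
    cfL α (k + 1) * cfQ α k - cfL α k * cfQ α (k + 1) = (-1) ^ k := by
  induction k with
  | zero =>
    show cfL α 1 * cfQ α 0 - cfL α 0 * cfQ α 1 = 1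
    rw [show cfQ α 1 = cfA α 1 from rfl, show cfQ α 0 = 1 from rfl,
      show cfL α 1 = cfA α 0 * cfA α 1 + 1 from rfl, show cfL α 0 = cfA α 0 from rfl]
    ring
  | succ n ih =>
    rw [show cfQ α (n+2) = cfA α (n+2) * cfQ α (n+1) + cfQ α n from rfl,
      show cfL α (n+2) = cfA α (n+2) * cfL α (n+1) + cfL α n from rfl]
    have : (-1:ℤ)^(n+1) = -(-1)^n := by ring
    rw [this, ← ih]; ring

open Real in
lemma fh_approx (k : ℕ) :
    |(cfQ α (k + 1) : ℝ) * α - (cfL α (k + 1) : ℝ)| ≤ 1 / (cfQ α (k + 2) : ℝ) := by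
  have hX1 : 1 < cfX α (k + 2) := one_lt_cfX hα (k + 1)
  have hq1 : (1 : ℝ) ≤ (cfQ α (k + 1) : ℝ) := by exact_mod_cast one_le_cfQ hα (k + 1)
  have hq0 : (1 : ℝ) ≤ (cfQ α k : ℝ) := by exact_mod_cast one_le_cfQ hα k
  have hq2 : (1 : ℝ) ≤ (cfQ α (k + 2) : ℝ) := by exact_mod_cast one_le_cfQ hα (k + 2)
  have hD : (0 : ℝ) < (cfQ α (k + 1) : ℝ) * cfX α (k + 2) + (cfQ α k : ℝ) := by nlinarith
  have hkey := key_identity hα k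
  have hdet : ((cfL α (k+1) : ℝ) * (cfQ α k : ℝ) - (cfL α k : ℝ) * (cfQ α (k+1) : ℝ)) = (-1)^k := by
    have := det_identity (α := α) k
    have := congrArg (fun z : ℤ => (z : ℝ)) this
    push_cast at this
    linarith [this]
  have hprod : ((cfQ α (k+1) : ℝ) * α - (cfL α (k+1) : ℝ))
      * ((cfQ α (k + 1) : ℝ) * cfX α (k + 2) + (cfQ α k : ℝ)) = -(-1)^k := by
    linear_combination (cfQ α (k+1) : ℝ) * hkey - hdet
  have habs : |(cfQ α (k+1) : ℝ) * α - (cfL α (k+1) : ℝ)|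
      * ((cfQ α (k + 1) : ℝ) * cfX α (k + 2) + (cfQ α k : ℝ)) = 1 := by
    have h2 := congrArg (fun z : ℝ => |z|) hprod
    simp only [abs_mul] at h2
    rw [abs_of_pos hD] at h2
    rw [h2]
    rw [abs_neg, abs_pow, abs_neg, abs_one, one_pow]
  have hDle : (cfQ α (k + 2) : ℝ) ≤ (cfQ α (k + 1) : ℝ) * cfX α (k + 2) + (cfQ α k : ℝ) := by
    have hfloor : (cfA α (k + 2) : ℝ) ≤ cfX α (k + 2) := Int.floor_le _
    rw [show cfQ α (k+2) = cfA α (k+2) * cfQ α (k+1) + cfQ α k from rfl]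
    push_cast
    nlinarith
  have heq : |(cfQ α (k+1) : ℝ) * α - (cfL α (k+1) : ℝ)|
      = 1 / ((cfQ α (k + 1) : ℝ) * cfX α (k + 2) + (cfQ α k : ℝ)) :=
    eq_one_div_of_mul_eq_one_right (by linarith [habs])
  rw [heq]
  exact one_div_le_one_div_of_le (by linarith) hDle

lemma fh_q_ge (hgrow : ∀ k : ℕ, 1 ≤ k → Real.exp (cfQ α k) ≤ (cfQ α (k + 1) : ℝ)) :
    ∀ m : ℕ, (m : ℝ) ≤ (cfQ α m : ℝ) := by
  intro m
  induction m with
  | zero => simp [show cfQ α 0 = 1 from rfl]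
  | succ n ih =>
    match n, ih with
    | 0, _ =>
      have := one_le_cfQ hα 1
      push_cast
      exact_mod_cast this
    | (m + 1), ih =>
      have h1 := hgrow (m + 1) (by omega)
      have h2 := Real.add_one_le_exp ((cfQ α (m + 1) : ℝ))
      push_cast
      push_cast at ih
      linarith

lemma fh_exp_bound (hgrow : ∀ k : ℕ, 1 ≤ k → Real.exp (cfQ α k) ≤ (cfQ α (k + 1) : ℝ))
    (m : ℕ) (hm : 1 ≤ m) :
    |(cfQ α m : ℝ) * α - (cfL α m : ℝ)| ≤ Real.exp (-(cfQ α m : ℝ)) := by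
  obtain ⟨k, rfl⟩ : ∃ k, m = k + 1 := ⟨m - 1, by omega⟩
  refine (fh_approx hα k).trans ?_
  rw [Real.exp_neg, one_div]
  exact inv_anti₀ (Real.exp_pos _) (hgrow (k + 1) (by omega))

omit hα

open Complex in
lemma norm_exp_I_sub_one (s : ℝ) : ‖Complex.exp (Complex.I * s) - 1‖ ≤ 2 * |s| := by
  have habs : ‖Complex.I * s‖ = |s| := by
    simp
  by_cases h : |s| ≤ 1
  · have := Complex.norm_exp_sub_one_le (x := Complex.I * s) (by rw [habs]; exact h)
    rw [habs] at this
    exact this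
  · have h1 : ‖Complex.exp (Complex.I * s)‖ = 1 := by
      rw [Complex.norm_exp]
      simp
    calc ‖Complex.exp (Complex.I * s) - 1‖ ≤ ‖Complex.exp (Complex.I * s)‖ + ‖(1:ℂ)‖ :=
          norm_sub_le _ _
      _ = 2 := by rw [h1]; norm_num
      _ ≤ 2 * |s| := by nlinarith [not_le.1 h]

lemma e_eq_exp_sub_int (t : ℝ) (n : ℤ) : e t = Complex.exp (Complex.I * ((2 * Real.pi * (t - n) : ℝ) : ℂ)) := by
  rw [e, show (2 * (Real.pi:ℂ) * Complex.I * t) = Complex.I * ((2 * Real.pi * (t - n) : ℝ) : ℂ) + n * (2 * Real.pi * Complex.I) by push_cast; ring,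
    Complex.exp_add, Complex.exp_int_mul_two_pi_mul_I, mul_one]

lemma norm_e_sub_one_le (t : ℝ) (n : ℤ) : ‖e t - 1‖ ≤ 4 * Real.pi * |t - n| := by
  rw [e_eq_exp_sub_int t n]
  refine (norm_exp_I_sub_one _).trans_eq ?_
  rw [abs_mul, abs_of_pos (by positivity : (0:ℝ) < 2 * Real.pi)]
  ring

lemma e_neg (t : ℝ) : e (-t) = starRingEnd ℂ (e t) := by
  rw [e, e, ← Complex.exp_conj]
  congr 1
  simp only [map_mul, Complex.conj_I, Complex.conj_ofReal, map_ofNat]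
  push_cast
  ring

lemma e_add_int (t : ℝ) (n : ℤ) : e (t + n) = e t := by
  rw [e, e, show (2 * (Real.pi:ℂ) * Complex.I * ((t:ℝ) + (n:ℤ) : ℝ)) = 2 * (Real.pi:ℂ) * Complex.I * t + n * (2 * Real.pi * Complex.I) by push_cast; ring,
    Complex.exp_add, Complex.exp_int_mul_two_pi_mul_I, mul_one]

lemma norm_e (t : ℝ) : ‖e t‖ = 1 := by
  rw [e, Complex.norm_exp]
  simp [show (2 * (Real.pi:ℂ) * Complex.I * t).re = 0 by simp]

lemma cfQZ_neg (k : ℤ) (hk : k ≠ 0) : cfQZ α (-k) = -cfQZ α k := by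
  unfold cfQZ
  rcases lt_or_gt_of_ne hk with h | h
  · rw [if_pos (by omega), if_neg (by omega), neg_neg]
  · rw [if_neg (by omega), if_pos (by omega), neg_neg]

include hα in
lemma fh_abs_cfQZ (k : ℤ) : |(cfQZ α k : ℝ)| = (cfQ α k.natAbs : ℝ) := by
  have h1 : (1:ℤ) ≤ cfQ α k.natAbs := one_le_cfQ hα _
  have h1' : (0:ℝ) < (cfQ α k.natAbs : ℝ) := by exact_mod_cast lt_of_lt_of_le zero_lt_one h1
  unfold cfQZ
  split_ifs with h
  · have ht : k.toNat = k.natAbs := by omega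
    rw [ht, abs_of_pos h1']
  · have ht : (-k).toNat = k.natAbs := by omega
    rw [ht]
    push_cast
    rw [abs_neg, abs_of_pos h1']

include hα in
lemma fh_coef (hgrow : ∀ k : ℕ, 1 ≤ k → Real.exp (cfQ α k) ≤ (cfQ α (k + 1) : ℝ))
    (k : ℤ) (hk : k ≠ 0) :
    ‖e ((cfQZ α k : ℝ) * α) - 1‖ ≤ 4 * Real.pi * Real.exp (-(cfQ α k.natAbs : ℝ)) := by
  have hπ : (0:ℝ) < Real.pi := Real.pi_pos
  have hnat : ∀ m : ℕ, 1 ≤ m →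
      ‖e ((cfQ α m : ℝ) * α) - 1‖ ≤ 4 * Real.pi * Real.exp (-(cfQ α m : ℝ)) := by
    intro m hm
    refine (norm_e_sub_one_le _ (cfL α m)).trans ?_
    have hb := fh_exp_bound hα hgrow m hm
    have h4 : (0:ℝ) ≤ 4 * Real.pi := by positivity
    exact mul_le_mul_of_nonneg_left hb h4
  have hm1 : 1 ≤ k.natAbs := by omega
  rcases lt_or_gt_of_ne hk with h | h
  · have hz : (cfQZ α k : ℝ) = -(cfQ α k.natAbs : ℝ) := by
      unfold cfQZ
      rw [if_neg (by omega)]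
      have ht : (-k).toNat = k.natAbs := by omega
      rw [ht]; push_cast; ring
    rw [hz, show -(cfQ α k.natAbs : ℝ) * α = -((cfQ α k.natAbs : ℝ) * α) by ring, e_neg]
    rw [show (1:ℂ) = starRingEnd ℂ 1 by simp, ← map_sub, RCLike.norm_conj]
    exact hnat k.natAbs hm1
  · have hz : (cfQZ α k : ℝ) = (cfQ α k.natAbs : ℝ) := by
      unfold cfQZ
      rw [if_pos (by omega)]
      have ht : k.toNat = k.natAbs := by omega
      rw [ht]
    rw [hz]
    exact hnat k.natAbs hm1

theorem furstenberg_h_smooth (α : ℝ) (hα : Irrational α)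
    (hgrow : ∀ k : ℕ, 1 ≤ k → Real.exp (cfQ α k) ≤ (cfQ α (k + 1) : ℝ)) :
    (∀ x : ℝ, Summable (fun k : ℤ => if k = 0 then (0 : ℂ) else
        ((e ((cfQZ α k : ℝ) * α) - 1) / (|k| : ℝ)) * e ((cfQZ α k : ℝ) * x))) ∧
    ∃ h : ℝ → ℝ, ContDiff ℝ (⊤ : ℕ∞) h ∧ Function.Periodic h 1 ∧
      ∀ x : ℝ,
        (∑' k : ℤ, if k = 0 then (0 : ℂ) else
          ((e ((cfQZ α k : ℝ) * α) - 1) / (|k| : ℝ)) * e ((cfQZ α k : ℝ) * x))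
        = (h x : ℂ) := by
  have hπ : (0:ℝ) < Real.pi := Real.pi_pos
  let c : ℤ → ℂ := fun k => if k = 0 then 0 else (e ((cfQZ α k : ℝ) * α) - 1) / (|k| : ℝ)
  let b : ℤ → ℝ := fun k => 2 * Real.pi * (cfQZ α k : ℝ)
  let F : ℤ → ℂ → ℂ := fun k z => c k * Complex.exp (Complex.I * (b k) * z)
  let Q : ℤ → ℝ := fun k => (cfQ α k.natAbs : ℝ)
  have hQ1 : ∀ k, (1:ℝ) ≤ Q k := fun k => by
    show (1:ℝ) ≤ ((cfQ α k.natAbs : ℤ) : ℝ)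
    exact_mod_cast one_le_cfQ hα k.natAbs
  have hQge : ∀ k : ℤ, (k.natAbs : ℝ) ≤ Q k := fun k => fh_q_ge hα hgrow k.natAbs
  have hFe : ∀ (k : ℤ) (x : ℝ), F k (x : ℂ) = c k * e ((cfQZ α k : ℝ) * x) := by
    intro k x
    show c k * Complex.exp (Complex.I * (b k) * (x:ℂ)) = c k * e ((cfQZ α k : ℝ) * x)
    rw [e]
    congr 2
    show Complex.I * ((2 * Real.pi * (cfQZ α k : ℝ) : ℝ) : ℂ) * (x:ℂ) = _
    push_cast
    ring
  have hterm : ∀ (k : ℤ) (x : ℝ),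
      (if k = 0 then (0 : ℂ) else
        ((e ((cfQZ α k : ℝ) * α) - 1) / (|k| : ℝ)) * e ((cfQZ α k : ℝ) * x)) = F k (x : ℂ) := by
    intro k x
    rw [hFe]
    by_cases hk : k = 0
    · simp [hk, c]
    · simp only [c, if_neg hk]
  -- norm of coefficients
  have hc_norm : ∀ k : ℤ, ‖c k‖ ≤ 4 * Real.pi * Real.exp (-(Q k)) := by
    intro k
    by_cases hk : k = 0
    · simp only [c, if_pos hk, norm_zero]
      positivity
    · simp only [c, if_neg hk]
      rw [norm_div]
      have hk1 : (1:ℝ) ≤ ‖((|(k : ℝ)| : ℝ) : ℂ)‖ := by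
        rw [Complex.norm_real, Real.norm_eq_abs, abs_abs]
        exact_mod_cast Int.one_le_abs hk
      refine (div_le_self (norm_nonneg _) hk1).trans ?_
      exact fh_coef hα hgrow k hk
  -- the strip
  let U : Set ℂ := {z : ℂ | |z.im| < (4 * Real.pi)⁻¹}
  have hUopen : IsOpen U :=
    IsOpen.preimage (continuous_abs.comp Complex.continuous_im) isOpen_Iio
  have hmemU : ∀ x : ℝ, (x : ℂ) ∈ U := by
    intro x
    show |(Complex.ofReal x).im| < (4 * Real.pi)⁻¹
    simp only [Complex.ofReal_im, abs_zero]
    positivity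
  -- the majorant
  let u : ℤ → ℝ := fun k => 4 * Real.pi * Real.exp (-(k.natAbs : ℝ) / 2)
  have hu : Summable u := by
    have hgeo : Summable (fun m : ℕ => (Real.exp (-(1:ℝ)/2)) ^ m) :=
      summable_geometric_of_lt_one (Real.exp_nonneg _)
        (Real.exp_lt_one_iff.mpr (by norm_num))
    have key : ∀ m : ℕ, Real.exp (-(m:ℝ)/2) = (Real.exp (-(1:ℝ)/2)) ^ m := by
      intro m
      rw [← Real.exp_nat_mul]
      congr 1
      ring
    apply Summable.mul_left
    apply Summable.of_nat_of_neg
    · refine hgeo.congr fun n => ?_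
      have hn : ((n : ℤ)).natAbs = n := Int.natAbs_natCast n
      rw [hn, ← key n]
    · refine hgeo.congr fun n => ?_
      have hn : ((-(n : ℤ))).natAbs = n := by simp
      rw [hn, ← key n]
  -- bound on the strip
  have hFbound : ∀ (k : ℤ) (w : ℂ), w ∈ U → ‖F k w‖ ≤ u k := by
    intro k w hw
    have habsb : |b k| = 2 * Real.pi * Q k := by
      show |2 * Real.pi * (cfQZ α k : ℝ)| = _
      rw [abs_mul, abs_of_pos (by positivity : (0:ℝ) < 2 * Real.pi), fh_abs_cfQZ hα]
    have hre : (Complex.I * (b k) * w).re = -(b k * w.im) := by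
      simp [Complex.mul_re, Complex.mul_im]
    have hexp : ‖Complex.exp (Complex.I * (b k) * w)‖ = Real.exp (-(b k * w.im)) := by
      rw [Complex.norm_exp, hre]
    have him : -(b k * w.im) ≤ Q k / 2 := by
      have h3 : |w.im| ≤ (4 * Real.pi)⁻¹ := le_of_lt hw
      have h5 : |b k| * |w.im| ≤ (2 * Real.pi * Q k) * (4 * Real.pi)⁻¹ :=
        mul_le_mul (le_of_eq habsb) h3 (abs_nonneg _) (by nlinarith [hQ1 k])
      calc -(b k * w.im) ≤ |b k * w.im| := neg_le_abs _
        _ = |b k| * |w.im| := abs_mul _ _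
        _ ≤ (2 * Real.pi * Q k) * (4 * Real.pi)⁻¹ := h5
        _ = Q k / 2 := by field_simp; ring
    calc ‖F k w‖ = ‖c k‖ * Real.exp (-(b k * w.im)) := by rw [norm_mul, hexp]
      _ ≤ (4 * Real.pi * Real.exp (-(Q k))) * Real.exp (Q k / 2) := by
          exact mul_le_mul (hc_norm k) (Real.exp_le_exp.2 him) (Real.exp_nonneg _)
            (by positivity)
      _ = 4 * Real.pi * Real.exp (-(Q k) + Q k / 2) := by rw [Real.exp_add]; ring
      _ ≤ u k := by
          show _ ≤ 4 * Real.pi * Real.exp (-(k.natAbs : ℝ) / 2)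
          have : -(Q k) + Q k / 2 ≤ -(k.natAbs : ℝ) / 2 := by
            have := hQge k
            linarith
          have h7 := Real.exp_le_exp.2 this
          nlinarith [Real.exp_pos (-(Q k) + Q k / 2)]
  -- summability at real points
  have hsum : ∀ x : ℝ, Summable (fun k : ℤ => F k (x : ℂ)) := by
    intro x
    exact Summable.of_norm_bounded hu (fun k => hFbound k _ (hmemU x))
  have hsum' : ∀ x : ℝ, Summable (fun k : ℤ => if k = 0 then (0 : ℂ) else
      ((e ((cfQZ α k : ℝ) * α) - 1) / (|k| : ℝ)) * e ((cfQZ α k : ℝ) * x)) := by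
    intro x
    exact (hsum x).congr fun k => (hterm k x).symm
  refine ⟨hsum', ?_⟩
  -- the function
  refine ⟨fun x => Complex.reCLM (∑' k : ℤ, F k (x : ℂ)), ?_, ?_, ?_⟩
  · -- smoothness via analyticity
    have hdiff : DifferentiableOn ℂ (fun z => ∑' k : ℤ, F k z) U := by
      apply Complex.differentiableOn_tsum_of_summable_norm hu ?_ hUopen hFbound
      intro k
      exact ((Complex.differentiable_exp.comp
        (differentiable_id.const_mul (Complex.I * (b k)))).const_mul (c k)).differentiableOn
    have han : ∀ x : ℝ, AnalyticAt ℝ (fun x : ℝ => Complex.reCLM (∑' k : ℤ, F k (x : ℂ))) x := by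
      intro x
      have h1 : AnalyticAt ℂ (fun z => ∑' k : ℤ, F k z) (x : ℂ) :=
        hdiff.analyticAt (hUopen.mem_nhds (hmemU x))
      have h2 : AnalyticAt ℝ (fun x : ℝ => (x : ℂ)) x := Complex.ofRealCLM.analyticAt x
      have h3 : AnalyticAt ℝ (fun x : ℝ => ∑' k : ℤ, F k (x : ℂ)) x :=
        (h1.restrictScalars (𝕜 := ℝ)).comp h2
      exact AnalyticAt.comp (g := ⇑Complex.reCLM)
        (f := fun x : ℝ => ∑' k : ℤ, F k (x : ℂ))
        (Complex.reCLM.analyticAt _) h3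
    exact AnalyticOnNhd.contDiff (fun x _ => han x)
  · -- periodicity
    intro x
    have hper : ∀ k : ℤ, F k ((x + 1 : ℝ) : ℂ) = F k (x : ℂ) := by
      intro k
      rw [hFe, hFe]
      congr 1
      rw [show (cfQZ α k : ℝ) * (x + 1) = (cfQZ α k : ℝ) * x + (cfQZ α k : ℤ) by push_cast; ring]
      exact e_add_int _ _
    simp only [hper]
  · -- realness
    intro x
    rw [tsum_congr (fun k => hterm k x)]
    have hconj : (starRingEnd ℂ) (∑' k : ℤ, F k (x : ℂ)) = ∑' k : ℤ, F k (x : ℂ) := by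
      have hstar : (starRingEnd ℂ) (∑' k : ℤ, F k (x : ℂ)) = ∑' k : ℤ, (starRingEnd ℂ) (F k (x : ℂ)) := by
        exact tsum_star
      rw [hstar]
      have hFconj : ∀ k : ℤ, (starRingEnd ℂ) (F k (x : ℂ)) = F (-k) (x : ℂ) := by
        intro k
        rw [hFe, hFe, map_mul]
        by_cases hk : k = 0
        · simp [hk, c]
        · have hneg : (cfQZ α (-k) : ℝ) = -(cfQZ α k : ℝ) := by
            rw [cfQZ_neg _ hk]; push_cast; ring
          have hce : (starRingEnd ℂ) (e ((cfQZ α k : ℝ) * x)) = e ((cfQZ α (-k) : ℝ) * x) := by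
            rw [hneg, show -(cfQZ α k : ℝ) * x = -((cfQZ α k : ℝ) * x) by ring, e_neg]
          rw [hce]
          congr 1
          simp only [c, if_neg hk, if_neg (show ¬(-k = 0) by omega)]
          rw [map_div₀, map_sub, map_one, Complex.conj_ofReal]
          congr 2
          · rw [hneg, show -(cfQZ α k : ℝ) * α = -((cfQZ α k : ℝ) * α) by ring, e_neg]
          · push_cast
            rw [abs_neg]
      rw [tsum_congr hFconj]
      exact (Equiv.neg ℤ).tsum_eq (fun k => F k (x : ℂ))
    show ∑' (k : ℤ), F k ((x:ℝ):ℂ) = (((∑' (k : ℤ), F k ((x:ℝ):ℂ)).re : ℝ) : ℂ)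
    exact (Complex.conj_eq_iff_re.mp hconj).symm
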